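/- For x ∈ ℕ let a'_x = (2x−1)^{−(4x−2)}, b'_x = (2x)^{−4x}, c = ∑_{x≥1} a'_x + ∑_{x≥1} b'_x, a_x = a'_x/c, b_x = b'_x/c, b₀ = 0, and let k(x,x') be the birth-death transition probabilities with p_x = a_x b_x/((a_x+b_{x−1})(a_x+b_x)), q_x = a_{x−1}b_{x−1}/((a_x+b_{x−1})(a_{x−1}+b_{x−1})), k(1,1) = 1−p₁, k(x,x+1)=p_x, k(x,x−1)=q_x for x ≥ 2, and k(x,x) = r_x := 1−p_x−q_x for x ≥ 2. Then ∑_{x=1}^∞ k(x,x) = 1 − p₁ + ∑_{x=2}^∞ r_x < ∞. (By the trace-class criterion for self-adjoint positive Markov operators on countable state spaces, this shows the chain is trace-class, even though it is not uniformly ergodic.) -/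
import Mathlib


/-- a'_x = (2x−1)^{−(4x−2)}. -/
noncomputable def aSeq (x : ℕ) : ℝ := ((2 * (x : ℝ) - 1) ^ (4 * x - 2))⁻¹

/-- b'_x = (2x)^{−4x}. -/
noncomputable def bSeq (x : ℕ) : ℝ := ((2 * (x : ℝ)) ^ (4 * x))⁻¹

/-- The normalizing constant c = ∑_{x≥1} a'_x + ∑_{x≥1} b'_x. -/
noncomputable def cNorm : ℝ := (∑' x : ℕ, aSeq (x + 1)) + (∑' x : ℕ, bSeq (x + 1))

/-- a*_x = a'_x/c. -/
noncomputable def aStar (x : ℕ) : ℝ := aSeq x / cNorm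

/-- b*_x = b'_x/c for x ≥ 1, with b*₀ = 0. -/
noncomputable def bStar (x : ℕ) : ℝ := if x = 0 then 0 else bSeq x / cNorm

/-- p_x = a_x b_x / ((a_x + b_{x−1})(a_x + b_x)). -/
noncomputable def pStar (x : ℕ) : ℝ :=
  aStar x * bStar x / ((aStar x + bStar (x - 1)) * (aStar x + bStar x))

/-- q_x = a_{x−1} b_{x−1} / ((a_x + b_{x−1})(a_{x−1} + b_{x−1})). -/
noncomputable def qStar (x : ℕ) : ℝ :=
  aStar (x - 1) * bStar (x - 1) / ((aStar x + bStar (x - 1)) * (aStar (x - 1) + bStar (x - 1)))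

/-- r_x = 1 − p_x − q_x. -/
noncomputable def rStar (x : ℕ) : ℝ := 1 - pStar x - qStar x

/-- The birth-death transition probabilities. -/
noncomputable def kStar (x x' : ℕ) : ℝ :=
  if x = 1 ∧ x' = 1 then 1 - pStar 1
  else if x' = x + 1 then pStar x
  else if 2 ≤ x ∧ x' = x - 1 then qStar x
  else if 2 ≤ x ∧ x' = x then rStar x
  else 0

lemma aSeq_succ (n : ℕ) : aSeq (n + 1) = ((2 * (n : ℝ) + 1) ^ (4 * n + 2))⁻¹ := by
  unfold aSeq
  have h1 : 4 * (n + 1) - 2 = 4 * n + 2 := by omega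
  rw [h1]
  push_cast
  ring_nf

lemma aSeq_two (n : ℕ) : aSeq (n + 2) = ((2 * (n : ℝ) + 3) ^ (4 * n + 6))⁻¹ := by
  unfold aSeq
  have h1 : 4 * (n + 2) - 2 = 4 * n + 6 := by omega
  rw [h1]
  push_cast
  ring_nf

lemma bSeq_succ (n : ℕ) : bSeq (n + 1) = ((2 * (n : ℝ) + 2) ^ (4 * n + 4))⁻¹ := by
  unfold bSeq
  have h1 : 4 * (n + 1) = 4 * n + 4 := by omega
  rw [h1]
  push_cast
  ring_nf

lemma aSeq_pos (n : ℕ) : 0 < aSeq (n + 1) := by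
  rw [aSeq_succ]; positivity

lemma bSeq_pos (n : ℕ) : 0 < bSeq (n + 1) := by
  rw [bSeq_succ]; positivity

lemma sq_summable : Summable (fun n : ℕ => (((n : ℝ) + 1) ^ 2)⁻¹) := by
  have := (summable_nat_add_iff (f := fun n : ℕ => ((n : ℝ) ^ 2)⁻¹) 1).2
    (Real.summable_nat_pow_inv.2 one_lt_two)
  simpa using this

lemma aSeq_summable : Summable (fun n : ℕ => aSeq (n + 1)) := by
  refine Summable.of_nonneg_of_le (fun n => (aSeq_pos n).le) (fun n => ?_) sq_summable
  rw [aSeq_succ]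
  apply inv_anti₀ (by positivity)
  calc ((n : ℝ) + 1) ^ 2 ≤ (2 * (n : ℝ) + 1) ^ 2 := by
        apply pow_le_pow_left₀ (by positivity); linarith
    _ ≤ (2 * (n : ℝ) + 1) ^ (4 * n + 2) := by
        apply pow_le_pow_right₀ (by linarith [Nat.cast_nonneg (α := ℝ) n]); omega

lemma bSeq_summable : Summable (fun n : ℕ => bSeq (n + 1)) := by
  refine Summable.of_nonneg_of_le (fun n => (bSeq_pos n).le) (fun n => ?_) sq_summable
  rw [bSeq_succ]
  apply inv_anti₀ (by positivity)
  calc ((n : ℝ) + 1) ^ 2 ≤ (2 * (n : ℝ) + 2) ^ 2 := by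
        apply pow_le_pow_left₀ (by positivity); linarith
    _ ≤ (2 * (n : ℝ) + 2) ^ (4 * n + 4) := by
        apply pow_le_pow_right₀ (by linarith [Nat.cast_nonneg (α := ℝ) n]); omega

lemma cNorm_pos : 0 < cNorm := by
  unfold cNorm
  have h1 : 0 < ∑' x : ℕ, aSeq (x + 1) :=
    Summable.tsum_pos aSeq_summable (fun n => (aSeq_pos n).le) 0 (aSeq_pos 0)
  have h2 : 0 < ∑' x : ℕ, bSeq (x + 1) :=
    Summable.tsum_pos bSeq_summable (fun n => (bSeq_pos n).le) 0 (bSeq_pos 0)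
  linarith

lemma aStar_pos (n : ℕ) : 0 < aStar (n + 1) := div_pos (aSeq_pos n) cNorm_pos

lemma bStar_succ (n : ℕ) : bStar (n + 1) = bSeq (n + 1) / cNorm := if_neg (Nat.succ_ne_zero n)

lemma bStar_pos (n : ℕ) : 0 < bStar (n + 1) := by
  rw [bStar_succ]; exact div_pos (bSeq_pos n) cNorm_pos

lemma rStar_eq (n : ℕ) :
    rStar (n + 2) =
      aStar (n + 2) ^ 2 / ((aStar (n + 2) + bStar (n + 1)) * (aStar (n + 2) + bStar (n + 2)))
        + bStar (n + 1) ^ 2 /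
          ((aStar (n + 2) + bStar (n + 1)) * (aStar (n + 1) + bStar (n + 1))) := by
  have ha : 0 < aStar (n + 2) := aStar_pos (n + 1)
  have hA : 0 < aStar (n + 1) := aStar_pos n
  have hb : 0 < bStar (n + 2) := bStar_pos (n + 1)
  have hB : 0 < bStar (n + 1) := bStar_pos n
  unfold rStar pStar qStar
  have h1 : n + 2 - 1 = n + 1 := rfl
  rw [h1]
  field_simp
  ring

lemma rStar_nonneg (n : ℕ) : 0 ≤ rStar (n + 2) := by
  rw [rStar_eq]
  have ha : 0 < aStar (n + 2) := aStar_pos (n + 1)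
  have hA : 0 < aStar (n + 1) := aStar_pos n
  have hb : 0 < bStar (n + 2) := bStar_pos (n + 1)
  have hB : 0 < bStar (n + 1) := bStar_pos n
  positivity

lemma rStar_le_ratio (n : ℕ) :
    rStar (n + 2) ≤ aSeq (n + 2) / bSeq (n + 1) + bSeq (n + 1) / aSeq (n + 1) := by
  have ha : 0 < aStar (n + 2) := aStar_pos (n + 1)
  have hA : 0 < aStar (n + 1) := aStar_pos n
  have hb : 0 < bStar (n + 2) := bStar_pos (n + 1)
  have hB : 0 < bStar (n + 1) := bStar_pos n
  rw [rStar_eq]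
  have e1 : aStar (n + 2) / bStar (n + 1) = aSeq (n + 2) / bSeq (n + 1) := by
    rw [aStar, bStar_succ, div_div_div_cancel_right₀ (ne_of_gt cNorm_pos)]
  have e2 : bStar (n + 1) / aStar (n + 1) = bSeq (n + 1) / aSeq (n + 1) := by
    rw [aStar, bStar_succ, div_div_div_cancel_right₀ (ne_of_gt cNorm_pos)]
  rw [← e1, ← e2]
  have t1 : aStar (n + 2) ^ 2 / ((aStar (n + 2) + bStar (n + 1)) * (aStar (n + 2) + bStar (n + 2)))
      ≤ aStar (n + 2) / bStar (n + 1) := by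
    have h1 : aStar (n + 2) ^ 2 /
        ((aStar (n + 2) + bStar (n + 1)) * (aStar (n + 2) + bStar (n + 2)))
        ≤ aStar (n + 2) ^ 2 / (bStar (n + 1) * aStar (n + 2)) := by
      apply div_le_div_of_nonneg_left (by positivity) (by positivity)
      nlinarith
    have h2 : aStar (n + 2) ^ 2 / (bStar (n + 1) * aStar (n + 2))
        = aStar (n + 2) / bStar (n + 1) := by
      rw [div_eq_div_iff (by positivity) hB.ne']; ring
    linarith
  have t2 : bStar (n + 1) ^ 2 / ((aStar (n + 2) + bStar (n + 1)) * (aStar (n + 1) + bStar (n + 1)))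
      ≤ bStar (n + 1) / aStar (n + 1) := by
    have h1 : bStar (n + 1) ^ 2 /
        ((aStar (n + 2) + bStar (n + 1)) * (aStar (n + 1) + bStar (n + 1)))
        ≤ bStar (n + 1) ^ 2 / (bStar (n + 1) * aStar (n + 1)) := by
      apply div_le_div_of_nonneg_left (by positivity) (by positivity)
      nlinarith
    have h2 : bStar (n + 1) ^ 2 / (bStar (n + 1) * aStar (n + 1))
        = bStar (n + 1) / aStar (n + 1) := by
      rw [div_eq_div_iff (by positivity) hA.ne']; ring
    linarith
  linarith

lemma ratio1 (n : ℕ) : aSeq (n + 2) / bSeq (n + 1) ≤ ((2 * (n : ℝ) + 2) ^ 2)⁻¹ := by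
  rw [aSeq_two, bSeq_succ]
  have hp : (0:ℝ) < 2 * (n:ℝ) + 2 := by positivity
  have hP : (0:ℝ) < 2 * (n:ℝ) + 3 := by positivity
  have e : ((2 * (n:ℝ) + 3) ^ (4 * n + 6))⁻¹ / ((2 * (n:ℝ) + 2) ^ (4 * n + 4))⁻¹
      = (2 * (n:ℝ) + 2) ^ (4 * n + 4) / (2 * (n:ℝ) + 3) ^ (4 * n + 6) := by
    field_simp
  rw [e, div_le_iff₀ (by positivity), inv_mul_eq_div, le_div_iff₀ (by positivity), ← pow_add]
  have h2 : 4 * n + 4 + 2 = 4 * n + 6 := by omega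
  rw [h2]
  exact pow_le_pow_left₀ hp.le (by linarith) _

lemma ratio2 (n : ℕ) : bSeq (n + 1) / aSeq (n + 1) ≤ ((2 * (n : ℝ) + 2) ^ 2)⁻¹ := by
  rw [aSeq_succ, bSeq_succ]
  have hp : (0:ℝ) < 2 * (n:ℝ) + 1 := by positivity
  have hP : (0:ℝ) < 2 * (n:ℝ) + 2 := by positivity
  have e : ((2 * (n:ℝ) + 2) ^ (4 * n + 4))⁻¹ / ((2 * (n:ℝ) + 1) ^ (4 * n + 2))⁻¹
      = (2 * (n:ℝ) + 1) ^ (4 * n + 2) / (2 * (n:ℝ) + 2) ^ (4 * n + 4) := by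
    field_simp
  rw [e, div_le_iff₀ (by positivity), inv_mul_eq_div, le_div_iff₀ (by positivity)]
  calc (2 * (n:ℝ) + 1) ^ (4 * n + 2) * (2 * (n:ℝ) + 2) ^ 2
      ≤ (2 * (n:ℝ) + 2) ^ (4 * n + 2) * (2 * (n:ℝ) + 2) ^ 2 := by
        apply mul_le_mul_of_nonneg_right (pow_le_pow_left₀ hp.le (by linarith) _) (by positivity)
    _ = (2 * (n:ℝ) + 2) ^ (4 * n + 4) := by
        rw [← pow_add]

lemma half_bound (n : ℕ) :
    ((2 * (n:ℝ) + 2) ^ 2)⁻¹ + ((2 * (n:ℝ) + 2) ^ 2)⁻¹ ≤ (((n:ℝ) + 1) ^ 2)⁻¹ := by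
  have h : (2 * (n:ℝ) + 2) ^ 2 = 4 * ((n:ℝ) + 1) ^ 2 := by ring
  have hy : (0:ℝ) < ((n:ℝ) + 1) ^ 2 := by positivity
  rw [h, mul_inv]
  have : (0:ℝ) ≤ (((n:ℝ) + 1) ^ 2)⁻¹ := by positivity
  norm_num
  linarith

lemma rStar_bound (n : ℕ) : rStar (n + 2) ≤ (((n : ℝ) + 1) ^ 2)⁻¹ := by
  have h := rStar_le_ratio n
  have h1 := ratio1 n
  have h2 := ratio2 n
  have h3 := half_bound n
  linarith

lemma rStar_summable : Summable (fun n : ℕ => rStar (n + 2)) :=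
  Summable.of_nonneg_of_le rStar_nonneg rStar_bound sq_summable

lemma kStar_diag0 : kStar 1 1 = 1 - pStar 1 := by
  unfold kStar
  rw [if_pos ⟨rfl, rfl⟩]

lemma kStar_diag (n : ℕ) : kStar (n + 2) (n + 2) = rStar (n + 2) := by
  unfold kStar
  rw [if_neg (by omega), if_neg (by omega), if_neg (by omega), if_pos (by omega)]

/-- ∑_{x=1}^∞ k(x,x) = 1 − p₁ + ∑_{x=2}^∞ r_x < ∞ : the trace of the birth-death
chain is finite, so the chain is trace-class. -/
theorem stmt18 :
    (Summable fun x : ℕ => kStar (x + 1) (x + 1)) ∧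
      (Summable fun x : ℕ => rStar (x + 2)) ∧
      (∑' x : ℕ, kStar (x + 1) (x + 1)) = (1 - pStar 1) + ∑' x : ℕ, rStar (x + 2) := by
  have hsum1 : Summable fun x : ℕ => kStar (x + 1) (x + 1) := by
    refine (summable_nat_add_iff 1).1 ?_
    exact rStar_summable.congr fun n => (kStar_diag n).symm
  refine ⟨hsum1, rStar_summable, ?_⟩
  rw [Summable.tsum_eq_zero_add hsum1]
  congr 1
  exact tsum_congr fun n => kStar_diag n
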